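/- Let d ≥ 1, let Ω = [0,1]^d, let x_1, …, x_N ∈ Ω be pairwise distinct, and let ν_1, …, ν_N be strictly positive reals with Σ_i ν_i = 1. A vector ψ ∈ ℝ^N is a global maximizer of the Kantorovich dual functional K(ψ) = ∫_Ω min_i (‖x − x_i‖² − ψ_i) dx + Σ_i ψ_i ν_i if and only if the Lebesgue volume of the Laguerre cell Lag_i^ψ equals ν_i for every i. -/

import Mathlib

/-! The `c`-transform `ψᶜ = minⱼ (‖· - xⱼ‖² - ψⱼ)` satisfies `φᶜ ≤ ψᶜ + ψᵢ - φᵢ` on the `i`-th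
Laguerre cell of `ψ`, and distinct cells meet only in bisector hyperplanes, which are null because
the points are distinct. Integrating over the cells gives `K φ ≤ K ψ + Σᵢ (ψᵢ - φᵢ) (|Lagᵢ| - νᵢ)`,
so prescribed volumes make `ψ` a maximizer. Conversely, raising `ψᵢ` by `t > 0` lowers `∫ ψᶜ` by at
most `t` times the volume of the cell thickened by `t`, so maximality gives `νᵢ ≤ |Lagᵢ|` as
`t → 0⁺`; since the cells tile the cube up to null sets, `Σ |Lagᵢ| = 1 = Σ νᵢ` forces equality. -/

open MeasureTheory

/-- The unit cube `[0,1]^d` in Euclidean space. -/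
def unitCube (d : ℕ) : Set (EuclideanSpace ℝ (Fin d)) :=
  {p | ∀ k, p k ∈ Set.Icc (0 : ℝ) 1}

/-- The Laguerre cell of index `i`, relative to a set `Ω`, for points `x` and weights `ψ`. -/
def lagCell {d N : ℕ} (Ω : Set (EuclideanSpace ℝ (Fin d)))
    (x : Fin N → EuclideanSpace ℝ (Fin d)) (ψ : Fin N → ℝ) (i : Fin N) :
    Set (EuclideanSpace ℝ (Fin d)) :=
  {p ∈ Ω | ∀ j, ‖p - x i‖ ^ 2 - ψ i ≤ ‖p - x j‖ ^ 2 - ψ j}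

open Set Filter Topology

section AffineHyperplane

variable {E : Type*} [NormedAddCommGroup E] [InnerProductSpace ℝ E] [FiniteDimensional ℝ E]
  [MeasurableSpace E] [BorelSpace E] (μ : Measure E) [μ.IsAddHaarMeasure]

theorem MeasureTheory.Measure.addHaar_setOf_eq_of_ne_zero {f : E →ₗ[ℝ] ℝ} (hf : f ≠ 0) (k : ℝ) :
    μ {p | f p = k} = 0 := by
  obtain ⟨p₀, hp₀⟩ : ∃ p₀, f p₀ = k := LinearMap.surjective_or_eq_zero f |>.resolve_right hf k
  have hset : {p | f p = k} = (AffineSubspace.mk' p₀ (LinearMap.ker f) : Set E) := by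
    ext p
    simp [AffineSubspace.mem_mk', hp₀, sub_eq_zero]
  rw [hset]
  refine Measure.addHaar_affineSubspace μ _ fun htop => hf ?_
  rw [← LinearMap.ker_eq_top, ← AffineSubspace.direction_mk' p₀ (LinearMap.ker f), htop,
    AffineSubspace.direction_top]

theorem MeasureTheory.Measure.addHaar_setOf_sq_dist_sub_eq {a b : E} (hab : a ≠ b) (α β : ℝ) :
    μ {p | ‖p - a‖ ^ 2 - α = ‖p - b‖ ^ 2 - β} = 0 := by
  have hf : innerₛₗ ℝ (b - a) ≠ 0 := fun h => by
    have := LinearMap.congr_fun h (b - a)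
    rw [innerₛₗ_apply_apply, real_inner_self_eq_norm_sq] at this
    exact hab.symm (sub_eq_zero.1 (by simpa using this))
  convert Measure.addHaar_setOf_eq_of_ne_zero μ hf ((‖b‖ ^ 2 - ‖a‖ ^ 2 + α - β) / 2) using 2
  ext p
  rw [mem_ofPred_eq, mem_ofPred_eq, innerₛₗ_apply_apply, inner_sub_left, norm_sub_sq_real,
    norm_sub_sq_real, real_inner_comm p a, real_inner_comm p b]
  constructor <;> intro h <;> linarith

end AffineHyperplane

section LaguerreCell

variable {X ι : Type*}

def laguerreCell (c : ι → X → ℝ) (ψ : ι → ℝ) (i : ι) : Set X :=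
  {p | ∀ j, c i p - ψ i ≤ c j p - ψ j}

theorem pairwise_aedisjoint_laguerreCell [MeasurableSpace X] {μ : Measure X} {c : ι → X → ℝ}
    (hties : ∀ i j, i ≠ j → ∀ a b : ℝ, μ {p | c i p - a = c j p - b} = 0) (ψ : ι → ℝ) :
    Pairwise (Function.onFun (AEDisjoint μ) (laguerreCell c ψ)) := fun i j hij =>
  measure_mono_null (fun _ hp => le_antisymm (hp.1 j) (hp.2 i)) (hties i j hij (ψ i) (ψ j))

variable [DecidableEq ι] {c : ι → X → ℝ} {ψ : ι → ℝ} {p : X} {i : ι}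

theorem mem_laguerreCell_add_single {t : ℝ} (ht : 0 ≤ t) :
    p ∈ laguerreCell c (ψ + Pi.single i t) i ↔ ∀ j, c i p - ψ i ≤ c j p - ψ j + t := by
  refine forall_congr' fun j => ?_
  rcases eq_or_ne j i with rfl | hj
  · simp only [Pi.add_apply, Pi.single_eq_same]
    constructor <;> intro <;> linarith
  · simp only [Pi.add_apply, Pi.single_eq_same, Pi.single_eq_of_ne hj, add_zero]
    constructor <;> intro <;> linarith

theorem laguerreCell_add_single_mono {s t : ℝ} (hs : 0 ≤ s) (hst : s ≤ t) :
    laguerreCell c (ψ + Pi.single i s) i ⊆ laguerreCell c (ψ + Pi.single i t) i := fun p hp =>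
  (mem_laguerreCell_add_single (hs.trans hst)).2 fun j => by
    linarith [(mem_laguerreCell_add_single hs).1 hp j]

theorem biInter_laguerreCell_add_single :
    ⋂ t > 0, laguerreCell c (ψ + Pi.single i t) i = laguerreCell c ψ i := by
  ext p
  simp only [mem_iInter₂]
  constructor
  · intro h j
    exact le_of_forall_pos_le_add fun t ht => (mem_laguerreCell_add_single ht.le).1 (h t ht) j
  · intro h t ht
    exact (mem_laguerreCell_add_single ht.le).2 fun j => by linarith [h j]

end LaguerreCell

section CTransform

variable {X ι : Type*} [Fintype ι] [Nonempty ι]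

def cTransform (c : ι → X → ℝ) (φ : ι → ℝ) (p : X) : ℝ :=
  Finset.univ.inf' Finset.univ_nonempty fun j => c j p - φ j

variable {c : ι → X → ℝ} {φ ψ : ι → ℝ} {p : X} {i : ι}

theorem cTransform_le (c : ι → X → ℝ) (φ : ι → ℝ) (p : X) (j : ι) :
    cTransform c φ p ≤ c j p - φ j :=
  Finset.inf'_le _ (Finset.mem_univ j)

theorem le_cTransform {a : ℝ} (h : ∀ j, a ≤ c j p - φ j) : a ≤ cTransform c φ p :=
  Finset.le_inf' _ _ fun j _ => h j

theorem cTransform_eq_of_mem_laguerreCell (h : p ∈ laguerreCell c ψ i) :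
    cTransform c ψ p = c i p - ψ i :=
  (cTransform_le c ψ p i).antisymm (le_cTransform h)

theorem cTransform_le_add_of_mem_laguerreCell (h : p ∈ laguerreCell c ψ i) (φ : ι → ℝ) :
    cTransform c φ p ≤ cTransform c ψ p + (ψ i - φ i) := by
  rw [cTransform_eq_of_mem_laguerreCell h]
  linarith [cTransform_le c φ p i]

theorem iUnion_laguerreCell (c : ι → X → ℝ) (ψ : ι → ℝ) : ⋃ i, laguerreCell c ψ i = univ := by
  refine eq_univ_of_forall fun p => ?_
  obtain ⟨i, -, hi⟩ := Finset.exists_mem_eq_inf' Finset.univ_nonempty fun j => c j p - ψ j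
  exact mem_iUnion.2 ⟨i, fun j => hi ▸ cTransform_le c ψ p j⟩

theorem cTransform_sub_indicator_le_cTransform_add_single [DecidableEq ι] {t : ℝ} (ht : 0 ≤ t) :
    cTransform c ψ p - (laguerreCell c (ψ + Pi.single i t) i).indicator (fun _ => t) p ≤
      cTransform c (ψ + Pi.single i t) p := by
  by_cases hp : p ∈ laguerreCell c (ψ + Pi.single i t) i
  · rw [indicator_of_mem hp]
    refine le_cTransform fun j => ?_
    have := cTransform_le c ψ p j
    rcases eq_or_ne j i with rfl | hj
    · simp only [Pi.add_apply, Pi.single_eq_same]; linarith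
    · simp only [Pi.add_apply, Pi.single_eq_of_ne hj, add_zero]; linarith
  · rw [indicator_of_notMem hp, sub_zero]
    obtain ⟨k, hk⟩ : ∃ k, c k p - ψ k + t < c i p - ψ i := by
      by_contra! h
      exact hp ((mem_laguerreCell_add_single ht).2 h)
    refine le_cTransform fun j => ?_
    rcases eq_or_ne j i with rfl | hj
    · simp only [Pi.add_apply, Pi.single_eq_same]; linarith [cTransform_le c ψ p k]
    · simp only [Pi.add_apply, Pi.single_eq_of_ne hj, add_zero]; exact cTransform_le c ψ p j

end CTransform

section KantorovichDual

variable {X ι : Type*} [MeasurableSpace X] [Fintype ι] {c : ι → X → ℝ} {μ : Measure X}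

theorem measurableSet_laguerreCell (hc : ∀ j, Measurable (c j)) (ψ : ι → ℝ) (i : ι) :
    MeasurableSet (laguerreCell c ψ i) := by
  simp only [laguerreCell, ofPred_forall]
  exact MeasurableSet.iInter fun j =>
    measurableSet_le ((hc i).sub_const _) ((hc j).sub_const _)

variable [Nonempty ι]

theorem integrable_cTransform (hc : ∀ j, Integrable (c j) μ) [IsFiniteMeasure μ] (φ : ι → ℝ) :
    Integrable (cTransform c φ) μ := by
  have : cTransform c φ = Finset.univ.inf' Finset.univ_nonempty fun j => c j - fun _ => φ j := by
    ext p
    simp [cTransform, Finset.inf'_apply]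
  rw [this]
  exact Finset.inf'_induction _ _ (p := fun f => Integrable f μ) (fun f hf g hg => hf.inf hg)
    fun j _ => (hc j).sub (integrable_const _)

noncomputable def kantorovichDual (μ : Measure X) (c : ι → X → ℝ) (ν φ : ι → ℝ) : ℝ :=
  ∫ p, cTransform c φ p ∂μ + ∑ j, φ j * ν j

variable {ν ψ : ι → ℝ}

theorem le_measureReal_laguerreCell_add_single [DecidableEq ι] [IsFiniteMeasure μ]
    (hcm : ∀ j, Measurable (c j)) (hci : ∀ j, Integrable (c j) μ)
    (hmax : ∀ φ, kantorovichDual μ c ν φ ≤ kantorovichDual μ c ν ψ) (i : ι) {t : ℝ} (ht : 0 < t) :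
    ν i ≤ μ.real (laguerreCell c (ψ + Pi.single i t) i) := by
  have hB := measurableSet_laguerreCell hcm (ψ + Pi.single i t) i
  have hloss : ∫ p, cTransform c ψ p ∂μ - μ.real (laguerreCell c (ψ + Pi.single i t) i) * t ≤
      ∫ p, cTransform c (ψ + Pi.single i t) p ∂μ := by
    rw [← smul_eq_mul, ← integral_indicator_const _ hB,
      ← integral_sub (integrable_cTransform hci ψ) ((integrable_const t).indicator hB)]
    exact integral_mono ((integrable_cTransform hci ψ).sub ((integrable_const t).indicator hB))
      (integrable_cTransform hci _) fun p => cTransform_sub_indicator_le_cTransform_add_single ht.le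
  have hpair : ∑ j, (ψ + Pi.single i t : ι → ℝ) j * ν j = ∑ j, ψ j * ν j + t * ν i := by
    simp [add_mul, Finset.sum_add_distrib, Pi.single_apply]
  have := hmax (ψ + Pi.single i t)
  rw [kantorovichDual, kantorovichDual, hpair] at this
  exact le_of_mul_le_mul_right (by linarith) ht

theorem le_measureReal_laguerreCell_of_forall_le [IsFiniteMeasure μ]
    (hcm : ∀ j, Measurable (c j)) (hci : ∀ j, Integrable (c j) μ)
    (hmax : ∀ φ, kantorovichDual μ c ν φ ≤ kantorovichDual μ c ν ψ) (i : ι) :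
    ν i ≤ μ.real (laguerreCell c ψ i) := by
  classical
  have hlim := tendsto_measure_biInter_gt (μ := μ) (a := (0 : ℝ))
    (s := fun t => laguerreCell c (ψ + Pi.single i t) i)
    (fun t _ => (measurableSet_laguerreCell hcm _ i).nullMeasurableSet)
    (fun s t hs hst => laguerreCell_add_single_mono hs.le hst) ⟨1, one_pos, measure_ne_top _ _⟩
  rw [biInter_laguerreCell_add_single] at hlim
  rw [measureReal_def, ← ENNReal.ofReal_le_iff_le_toReal (measure_ne_top _ _)]
  refine ge_of_tendsto hlim (eventually_nhdsWithin_of_forall fun t (ht : 0 < t) => ?_)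
  exact ENNReal.ofReal_le_of_le_toReal (le_measureReal_laguerreCell_add_single hcm hci hmax i ht)

section NullTies

variable (hties : ∀ i j, i ≠ j → ∀ a b : ℝ, μ {p | c i p - a = c j p - b} = 0)
include hties

theorem integral_eq_sum_setIntegral_laguerreCell (hcm : ∀ j, Measurable (c j)) (ψ : ι → ℝ)
    {f : X → ℝ} (hf : Integrable f μ) :
    ∫ p, f p ∂μ = ∑ i, ∫ p in laguerreCell c ψ i, f p ∂μ := by
  rw [← setIntegral_univ, ← iUnion_laguerreCell c ψ,
    integral_iUnion_ae (fun i => (measurableSet_laguerreCell hcm ψ i).nullMeasurableSet)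
      (pairwise_aedisjoint_laguerreCell hties ψ) hf.integrableOn, tsum_fintype]

theorem sum_measureReal_laguerreCell [IsFiniteMeasure μ] (hcm : ∀ j, Measurable (c j))
    (ψ : ι → ℝ) : ∑ i, μ.real (laguerreCell c ψ i) = μ.real univ := by
  simpa using (integral_eq_sum_setIntegral_laguerreCell hties hcm ψ (integrable_const (1 : ℝ))).symm

theorem kantorovichDual_le_of_measureReal_laguerreCell_eq [IsFiniteMeasure μ]
    (hcm : ∀ j, Measurable (c j)) (hci : ∀ j, Integrable (c j) μ)
    (hψ : ∀ i, μ.real (laguerreCell c ψ i) = ν i) (φ : ι → ℝ) :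
    kantorovichDual μ c ν φ ≤ kantorovichDual μ c ν ψ := by
  have hcell : ∀ i, ∫ p in laguerreCell c ψ i, cTransform c φ p ∂μ ≤
      ∫ p in laguerreCell c ψ i, cTransform c ψ p ∂μ + (ψ i - φ i) * ν i := fun i =>
    calc ∫ p in laguerreCell c ψ i, cTransform c φ p ∂μ
        ≤ ∫ p in laguerreCell c ψ i, (cTransform c ψ p + (ψ i - φ i)) ∂μ :=
          setIntegral_mono_on (integrable_cTransform hci φ).integrableOn
            ((integrable_cTransform hci ψ).add (integrable_const _)).integrableOn
            (measurableSet_laguerreCell hcm ψ i)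
            fun _ hp => cTransform_le_add_of_mem_laguerreCell hp φ
      _ = ∫ p in laguerreCell c ψ i, cTransform c ψ p ∂μ + (ψ i - φ i) * ν i := by
          rw [integral_add (integrable_cTransform hci ψ).integrableOn (integrable_const _),
            setIntegral_const, smul_eq_mul, hψ i, mul_comm]
  have hsum := Finset.sum_le_sum fun i (_ : i ∈ Finset.univ) => hcell i
  rw [Finset.sum_add_distrib, ← integral_eq_sum_setIntegral_laguerreCell hties hcm ψ
    (integrable_cTransform hci φ), ← integral_eq_sum_setIntegral_laguerreCell hties hcm ψ
    (integrable_cTransform hci ψ)] at hsum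
  simp only [kantorovichDual, sub_mul, Finset.sum_sub_distrib] at hsum ⊢
  linarith

theorem forall_kantorovichDual_le_iff [IsFiniteMeasure μ]
    (hcm : ∀ j, Measurable (c j)) (hci : ∀ j, Integrable (c j) μ)
    (hν : ∑ i, ν i = μ.real univ) :
    (∀ φ, kantorovichDual μ c ν φ ≤ kantorovichDual μ c ν ψ) ↔
      ∀ i, μ.real (laguerreCell c ψ i) = ν i := by
  refine ⟨fun hmax i => ?_, kantorovichDual_le_of_measureReal_laguerreCell_eq hties hcm hci⟩
  have hle i := le_measureReal_laguerreCell_of_forall_le hcm hci hmax i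
  rw [← sum_measureReal_laguerreCell hties hcm ψ] at hν
  exact ((Finset.sum_eq_sum_iff_of_le fun i _ => hle i).1 hν i (Finset.mem_univ i)).symm

end NullTies

end KantorovichDual

theorem unitCube_eq_preimage (d : ℕ) :
    unitCube d = WithLp.ofLp ⁻¹' univ.pi fun _ : Fin d => Icc (0 : ℝ) 1 := by
  ext p
  exact ⟨fun hp k _ => hp k, fun hp k => hp k trivial⟩

theorem isCompact_unitCube (d : ℕ) : IsCompact (unitCube d) := by
  rw [unitCube_eq_preimage]
  exact (EuclideanSpace.equiv (Fin d) ℝ).toHomeomorph.isCompact_preimage.2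
    (isCompact_univ_pi fun _ => isCompact_Icc)

theorem volume_unitCube (d : ℕ) : volume (unitCube d) = 1 := by
  rw [unitCube_eq_preimage, ← MeasurableEquiv.coe_toLp_symm,
    (EuclideanSpace.volume_preserving_symm_measurableEquiv_toLp (Fin d)).measure_preimage
      (MeasurableSet.univ_pi fun _ => measurableSet_Icc).nullMeasurableSet,
    volume_pi_pi]
  simp

theorem lagCell_eq_inter_laguerreCell {d N : ℕ} (Ω : Set (EuclideanSpace ℝ (Fin d)))
    (x : Fin N → EuclideanSpace ℝ (Fin d)) (ψ : Fin N → ℝ) (i : Fin N) :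
    lagCell Ω x ψ i = Ω ∩ laguerreCell (fun j p => ‖p - x j‖ ^ 2) ψ i :=
  rfl

theorem maximizer_iff_prescribed_volumes_general
    (d N : ℕ) (hN : 1 ≤ N)
    (x : Fin N → EuclideanSpace ℝ (Fin d))
    (hx : Function.Injective x)
    (ν : Fin N → ℝ) (hν : ∀ i, 0 < ν i) (hsum : ∑ i, ν i = 1)
    (ψ : Fin N → ℝ) :
    (∀ φ : Fin N → ℝ,
        (∫ p in unitCube d, Finset.univ.inf' ⟨⟨0, hN⟩, Finset.mem_univ _⟩
            (fun j => ‖p - x j‖ ^ 2 - φ j)) + ∑ j, φ j * ν j ≤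
          (∫ p in unitCube d, Finset.univ.inf' ⟨⟨0, hN⟩, Finset.mem_univ _⟩
            (fun j => ‖p - x j‖ ^ 2 - ψ j)) + ∑ j, ψ j * ν j) ↔
      (∀ i, volume (lagCell (unitCube d) x ψ i) = ENNReal.ofReal (ν i)) := by
  have : Nonempty (Fin N) := ⟨⟨0, hN⟩⟩
  have : IsFiniteMeasure (volume.restrict (unitCube d)) :=
    isFiniteMeasure_restrict.2 (by simp [volume_unitCube])
  have hcm : ∀ j, Measurable fun p : EuclideanSpace ℝ (Fin d) => ‖p - x j‖ ^ 2 := by fun_prop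
  have hci j : Integrable (fun p => ‖p - x j‖ ^ 2) (volume.restrict (unitCube d)) :=
    (by fun_prop : Continuous fun p => ‖p - x j‖ ^ 2).continuousOn.integrableOn_compact
      (isCompact_unitCube d)
  have hties i j (hij : i ≠ j) (a b : ℝ) :
      volume.restrict (unitCube d) {p | ‖p - x i‖ ^ 2 - a = ‖p - x j‖ ^ 2 - b} = 0 :=
    Measure.restrict_le_self.absolutelyContinuous
      (Measure.addHaar_setOf_sq_dist_sub_eq volume (hx.ne hij) a b)
  refine (forall_kantorovichDual_le_iff hties hcm hci (ψ := ψ) ?_).trans (forall_congr' fun i => ?_)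
  · rw [measureReal_restrict_apply_univ, measureReal_def, volume_unitCube, ENNReal.toReal_one, hsum]
  · rw [lagCell_eq_inter_laguerreCell, inter_comm,
      ← Measure.restrict_apply (measurableSet_laguerreCell hcm ψ i), measureReal_def,
      ← ENNReal.toReal_ofReal (hν i).le, ENNReal.toReal_eq_toReal_iff' (measure_ne_top _ _)
        ENNReal.ofReal_ne_top, ENNReal.toReal_ofReal (hν i).le]

/-- `ψ` globally maximizes the Kantorovich dual functional `K` if and only if
every Laguerre cell has exactly its prescribed volume. -/
theorem maximizer_iff_prescribed_volumes
    (d N : ℕ) (hd : 1 ≤ d) (hN : 1 ≤ N)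
    (x : Fin N → EuclideanSpace ℝ (Fin d))
    (hxΩ : ∀ i, x i ∈ unitCube d) (hx : Function.Injective x)
    (ν : Fin N → ℝ) (hν : ∀ i, 0 < ν i) (hsum : ∑ i, ν i = 1)
    (ψ : Fin N → ℝ) :
    (∀ φ : Fin N → ℝ,
        (∫ p in unitCube d, Finset.univ.inf' ⟨⟨0, hN⟩, Finset.mem_univ _⟩
            (fun j => ‖p - x j‖ ^ 2 - φ j)) + ∑ j, φ j * ν j ≤
          (∫ p in unitCube d, Finset.univ.inf' ⟨⟨0, hN⟩, Finset.mem_univ _⟩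
            (fun j => ‖p - x j‖ ^ 2 - ψ j)) + ∑ j, ψ j * ν j) ↔
      (∀ i, volume (lagCell (unitCube d) x ψ i) = ENNReal.ofReal (ν i)) :=
  maximizer_iff_prescribed_volumes_general d N hN x hx ν hν hsum ψ
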